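/- Let (Ω, 𝔄, P) be a probability space and M : Ω → M_n(ℂ) a P-integrable matrix-valued function with nonnegative Hermitian (positive semidefinite) values. Then ln det(∫_Ω M dP) ≥ ∫_Ω ln det M dP. -/

import Mathlib

open MeasureTheory
open scoped ComplexOrder

/-!
Write `A = ∫ M dP`. An integrable minorant `g` of `log det M` forces `M` to be positive definite
almost everywhere, hence `A` is positive definite. For positive definite `A` and `M`, the bound
`log x ≤ x - 1` applied to the eigenvalues of `A^{-1/2} M A^{-1/2}` gives
`log det M ≤ tr (A⁻¹ M) + log det A - n`. Integrating, the trace term becomes `tr (A⁻¹ A) = n`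
by linearity, which leaves `∫ g ≤ log det A`.
-/

open Matrix

theorem integral_pos_of_ae_pos {α 𝕜 : Type*} [MeasurableSpace α] {μ : Measure α} [NeZero μ]
    [RCLike 𝕜] {f : α → 𝕜} (hfi : Integrable f μ) (hf : ∀ᵐ x ∂μ, 0 < f x) :
    0 < ∫ x, f x ∂μ := by
  have hre : ∀ᵐ x ∂μ, 0 < RCLike.re (f x) := hf.mono fun _ h => (RCLike.pos_iff.mp h).1
  have him : ∀ᵐ x ∂μ, RCLike.im (f x) = 0 := hf.mono fun _ h => (RCLike.pos_iff.mp h).2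
  refine RCLike.pos_iff.mpr ⟨?_, ?_⟩
  · rw [← integral_re hfi, integral_pos_iff_support_of_nonneg_ae (hre.mono fun _ h => h.le) hfi.re,
      pos_iff_ne_zero, Ne, Measure.measure_support_eq_zero_iff μ]
    intro h0
    obtain ⟨x, hx, hx0⟩ := (hre.and h0).exists
    exact hx.ne' hx0
  · rw [← integral_im hfi, integral_eq_zero_of_ae him]

namespace Matrix

section PosDef

variable {𝕜 n : Type*} [RCLike 𝕜] [Fintype n] [DecidableEq n]

theorem PosDef.log_re_det_le_re_trace_sub_card {N : Matrix n n 𝕜} (hN : N.PosDef) :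
    Real.log (RCLike.re N.det) ≤ RCLike.re N.trace - Fintype.card n := by
  have hev := hN.eigenvalues_pos
  rw [hN.isHermitian.det_eq_prod_eigenvalues, hN.isHermitian.trace_eq_sum_eigenvalues,
    ← RCLike.ofReal_prod, ← RCLike.ofReal_sum, RCLike.ofReal_re, RCLike.ofReal_re,
    Real.log_prod fun i _ => (hev i).ne']
  calc ∑ i, Real.log (hN.isHermitian.eigenvalues i)
      ≤ ∑ i, (hN.isHermitian.eigenvalues i - 1) :=
        Finset.sum_le_sum fun i _ => Real.log_le_sub_one_of_pos (hev i)
    _ = _ := by simp [Finset.sum_sub_distrib]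

open scoped MatrixOrder in
theorem PosDef.log_re_det_le_re_trace_inv_mul {A M : Matrix n n 𝕜} (hA : A.PosDef)
    (hM : M.PosDef) :
    Real.log (RCLike.re M.det) ≤
      RCLike.re (A⁻¹ * M).trace + Real.log (RCLike.re A.det) - Fintype.card n := by
  set S := CFC.sqrt A⁻¹
  have hSS : S * S = A⁻¹ := CFC.sqrt_mul_sqrt_self _ hA.inv.posSemidef.nonneg
  have hSH : Sᴴ = S := (CFC.sqrt_nonneg A⁻¹).posSemidef.isHermitian
  have hS : IsUnit S := isUnit_of_mul_isUnit_left (hSS ▸ hA.inv.isUnit)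
  have hN : (S * M * S).PosDef := by
    simpa only [hSH] using hM.conjTranspose_mul_mul_same (mulVec_injective_of_isUnit hS)
  have htrace : (S * M * S).trace = (A⁻¹ * M).trace := by
    rw [trace_mul_cycle, ← hSS]
  have hdet : (S * M * S).det = A.det⁻¹ * M.det := by
    rw [det_mul, det_mul, mul_right_comm, ← det_mul, hSS, det_nonsing_inv, Ring.inverse_eq_inv']
  obtain ⟨a, ha, haA⟩ := RCLike.pos_iff_exists_ofReal.mp hA.det_pos
  have hMre : 0 < RCLike.re M.det := (RCLike.pos_iff.mp hM.det_pos).1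
  have key := hN.log_re_det_le_re_trace_sub_card
  rw [htrace, hdet, ← haA, ← RCLike.ofReal_inv, RCLike.re_ofReal_mul,
    Real.log_mul (inv_ne_zero ha.ne') hMre.ne', Real.log_inv] at key
  rw [← haA, RCLike.ofReal_re]
  linarith

end PosDef

section Integral

variable {Ω 𝕜 E m n : Type*} [MeasurableSpace Ω] {P : Measure Ω} [RCLike 𝕜]

theorem isHermitian_integral {M : Ω → Matrix n n 𝕜} (hM : ∀ᵐ ω ∂P, (M ω).IsHermitian) :
    (of fun i j => ∫ ω, M ω i j ∂P).IsHermitian := by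
  ext i j
  rw [conjTranspose_apply, of_apply, of_apply, RCLike.star_def, ← integral_conj]
  exact integral_congr_ae (hM.mono fun ω hω => by simpa using congr_fun₂ hω i j)

variable [NormedAddCommGroup E] [NormedSpace 𝕜 E] [Fintype m] [Fintype n] [DecidableEq m]
  [DecidableEq n]

theorem _root_.LinearMap.map_eq_sum_smul_single (L : Matrix m n 𝕜 →ₗ[𝕜] E)
    (X : Matrix m n 𝕜) : L X = ∑ i, ∑ j, X i j • L (single i j 1) := by
  conv_lhs => rw [matrix_eq_sum_single X]
  simp only [map_sum, ← L.map_smul, smul_single, smul_eq_mul, mul_one]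

theorem integrable_linearMap_comp {M : Ω → Matrix m n 𝕜}
    (hM : ∀ i j, Integrable (fun ω => M ω i j) P) (L : Matrix m n 𝕜 →ₗ[𝕜] E) :
    Integrable (fun ω => L (M ω)) P := by
  rw [funext fun ω => L.map_eq_sum_smul_single (M ω)]
  exact integrable_finsetSum _ fun i _ => integrable_finsetSum _ fun j _ =>
    (hM i j).smul_const _

theorem integral_linearMap_comp [NormedSpace ℝ E] [CompleteSpace E] {M : Ω → Matrix m n 𝕜}
    (hM : ∀ i j, Integrable (fun ω => M ω i j) P) (L : Matrix m n 𝕜 →ₗ[𝕜] E) :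
    ∫ ω, L (M ω) ∂P = L (of fun i j => ∫ ω, M ω i j ∂P) := by
  rw [funext fun ω => L.map_eq_sum_smul_single (M ω), L.map_eq_sum_smul_single,
    integral_finsetSum _ fun i _ => integrable_finsetSum _ fun j _ => (hM i j).smul_const _]
  refine Finset.sum_congr rfl fun i _ => ?_
  rw [integral_finsetSum _ fun j _ => (hM i j).smul_const _]
  exact Finset.sum_congr rfl fun j _ => by rw [integral_smul_const, of_apply]

theorem integral_trace_mul {M : Ω → Matrix m n 𝕜} (hM : ∀ i j, Integrable (fun ω => M ω i j) P)
    (B : Matrix n m 𝕜) :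
    ∫ ω, (B * M ω).trace ∂P = (B * of fun i j => ∫ ω, M ω i j ∂P).trace :=
  integral_linearMap_comp hM (traceLinearMap n 𝕜 𝕜 ∘ₗ mulLeftLinearMap n 𝕜 B)

theorem posDef_integral [NeZero P] {M : Ω → Matrix n n 𝕜}
    (hint : ∀ i j, Integrable (fun ω => M ω i j) P) (hM : ∀ᵐ ω ∂P, (M ω).PosDef) :
    (of fun i j => ∫ ω, M ω i j ∂P).PosDef := by
  refine .of_dotProduct_mulVec_pos (isHermitian_integral (hM.mono fun _ h => h.isHermitian))
    fun x hx => ?_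
  let q : Matrix n n 𝕜 →ₗ[𝕜] 𝕜 :=
    LinearMap.applyₗ x ∘ₗ LinearMap.applyₗ (star x) ∘ₗ (toLinearMap₂' 𝕜).toLinearMap
  have hq (X : Matrix n n 𝕜) : q X = star x ⬝ᵥ X *ᵥ x := by simp [q, toLinearMap₂'_apply']
  rw [← hq, ← integral_linearMap_comp hint]
  exact integral_pos_of_ae_pos (integrable_linearMap_comp hint q)
    (hM.mono fun ω hω => hq (M ω) ▸ hω.dotProduct_mulVec_pos hx)

end Integral

end Matrix

/-- **Generalized Minkowski inequality.** Let `(Ω, 𝔄, P)` be a probability space and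
`M : Ω → Mₙ(ℂ)` a `P`-integrable matrix-valued function with positive semidefinite values.
Then `ln det (∫ M dP) ≥ ∫ ln det M dP`. Since `det M ≥ 0` may vanish, `ln det M` takes
values in `[−∞, ∞)`; the inequality is expressed by saying that every integrable real
minorant `g` of `ln det M` (i.e. `exp g ≤ det M` a.e.) satisfies
`∫ g dP ≤ ln det (∫ M dP)`. -/
theorem generalized_minkowski_det (n : ℕ) {Ω : Type*} [MeasurableSpace Ω]
    (P : Measure Ω) [IsProbabilityMeasure P]
    (M : Ω → Matrix (Fin n) (Fin n) ℂ)
    (hint : ∀ i j, Integrable (fun ω => M ω i j) P)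
    (hpsd : ∀ ω, (M ω).PosSemidef) :
    ∀ g : Ω → ℝ, Integrable g P → (∀ᵐ ω ∂P, Real.exp (g ω) ≤ ((M ω).det).re) →
      ∫ ω, g ω ∂P ≤ Real.log (((Matrix.of fun i j => ∫ ω, M ω i j ∂P).det).re) := by
  intro g hg hbound
  set A := of fun i j => ∫ ω, M ω i j ∂P with hA_def
  have hMpos : ∀ᵐ ω ∂P, (M ω).PosDef ∧ g ω ≤ Real.log (M ω).det.re := by
    filter_upwards [hbound] with ω hω
    have hdet : 0 < (M ω).det.re := (Real.exp_pos _).trans_le hω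
    exact ⟨(hpsd ω).posDef_iff_det_ne_zero.mpr fun h => by simp [h] at hdet,
      (Real.le_log_iff_exp_le hdet).mpr hω⟩
  have hA : A.PosDef := posDef_integral hint (hMpos.mono fun _ h => h.1)
  have htrace : Integrable (fun ω => (A⁻¹ * M ω).trace) P :=
    integrable_linearMap_comp hint (traceLinearMap _ ℂ ℂ ∘ₗ mulLeftLinearMap _ ℂ A⁻¹)
  have hint_trace : ∫ ω, RCLike.re (A⁻¹ * M ω).trace ∂P = n := by
    rw [integral_re htrace, integral_trace_mul hint, ← hA_def,
      nonsing_inv_mul _ hA.det_pos.ne'.isUnit, trace_one]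
    simp
  calc ∫ ω, g ω ∂P
      ≤ ∫ ω, (RCLike.re (A⁻¹ * M ω).trace + (Real.log A.det.re - n)) ∂P := by
        refine integral_mono_ae hg (htrace.re.add (integrable_const _)) ?_
        filter_upwards [hMpos] with ω hω
        have := hA.log_re_det_le_re_trace_inv_mul hω.1
        simp only [RCLike.re_to_complex, Fintype.card_fin] at this ⊢
        linarith [hω.2]
    _ = Real.log A.det.re := by
        rw [integral_add htrace.re (integrable_const _), hint_trace]
        simp
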